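/- arXiv:math/0406440 — 4 statements merged into one kernel-verified Lean document; each statement's English description precedes it below -/
import Mathlib

section
/- Let D₁ and D₂ be ultrafilters on ᵐA, where A ⊆ C and C is full over A (every complete type over A in finitely many variables is realized by a sequence from C). If the average types Av(C,D₁) and Av(C,D₂) are equal, then def(D₁) = def(D₂). -/
open FirstOrder FirstOrder.Language Set Cardinal

universe u

variable (L : FirstOrder.Language.{u, u}) (Ω : Type u) [L.Structure Ω]

/-- A first-order formula in `m` free variables together with a tuple of parameters
from the monster model `Ω`. -/
def FormPar (m : ℕ) :=
  Σ k : ℕ, L.Formula (Fin m ⊕ Fin k) × (Fin k → Ω)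

variable {L Ω}

/-- Satisfaction of a parameterized formula by an `m`-tuple. -/
def RealizePar {m : ℕ} (x : Fin m → Ω) (q : FormPar L Ω m) : Prop :=
  q.2.1.Realize (Sum.elim x q.2.2)

/-- the negation of a parameterized formula -/
def FormPar.neg {m : ℕ} (q : FormPar L Ω m) : FormPar L Ω m :=
  ⟨q.1, (BoundedFormula.not q.2.1, q.2.2)⟩

/-- `b` is an (order-)indiscernible sequence of `r`-tuples over the parameter set `B`. -/
def IndiscernibleOver (L : FirstOrder.Language.{u,u}) [L.Structure Ω] (B : Set Ω) (r : ℕ) (b : ℕ → Fin r → Ω) : Prop :=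
  ∀ (n k : ℕ) (s t : Fin n → ℕ), StrictMono s → StrictMono t →
    ∀ (φ : L.Formula ((Fin n × Fin r) ⊕ Fin k)) (c : Fin k → Ω),
      (∀ i, c i ∈ B) →
      (φ.Realize (Sum.elim (fun p => b (s p.1) p.2) c) ↔
        φ.Realize (Sum.elim (fun p => b (t p.1) p.2) c))

/-- The formula-with-parameters `q` divides over `B`: there is a `B`-indiscernible
sequence starting with the parameters of `q` along which `q` is inconsistent. -/
def FormulaDividesOver (B : Set Ω) {m : ℕ} (q : FormPar L Ω m) : Prop :=
  ∃ b : ℕ → Fin q.1 → Ω, b 0 = q.2.2 ∧ IndiscernibleOver L B q.1 b ∧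
    ¬ ∃ x : Fin m → Ω, ∀ n : ℕ, q.2.1.Realize (Sum.elim x (b n))

/-- The type `p` divides over `B`. -/
def DividesOver (B : Set Ω) {m : ℕ} (p : Set (FormPar L Ω m)) : Prop :=
  ∃ q : FormPar L Ω m, FormulaDividesOver B q ∧
    ∀ x : Fin m → Ω, (∀ q' ∈ p, RealizePar x q') → RealizePar x q

/-- The type `p` forks over `B`: it implies a finite disjunction of formulas,
each of which divides over `B`. -/
def ForksOver (B : Set Ω) {m : ℕ} (p : Set (FormPar L Ω m)) : Prop :=
  ∃ (n : ℕ) (ψ : Fin n → FormPar L Ω m),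
    (∀ ℓ, FormulaDividesOver B (ψ ℓ)) ∧
    ∀ x : Fin m → Ω, (∀ q ∈ p, RealizePar x q) → ∃ ℓ, RealizePar x (ψ ℓ)

/-- The complete type of the tuple `x` over the set `A`. -/
def tpOver {m : ℕ} (x : Fin m → Ω) (A : Set Ω) : Set (FormPar L Ω m) :=
  {q | (∀ i, q.2.2 i ∈ A) ∧ RealizePar x q}

/-- `p` is a (consistent) type over `A`. -/
def IsTypeOver (A : Set Ω) {m : ℕ} (p : Set (FormPar L Ω m)) : Prop :=
  (∀ q ∈ p, ∀ i, q.2.2 i ∈ A) ∧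
  ∀ F : Finset (FormPar L Ω m), ↑F ⊆ p → ∃ x : Fin m → Ω, ∀ q ∈ F, RealizePar x q

/-- `p` is a complete type over `A`. -/
def IsCompleteTypeOver (A : Set Ω) {m : ℕ} (p : Set (FormPar L Ω m)) : Prop :=
  IsTypeOver A p ∧
  ∀ q : FormPar L Ω m, (∀ i, q.2.2 i ∈ A) → q ∈ p ∨ q.neg ∈ p

/-- `M` is (the universe of) an elementary submodel of the monster `Ω`
(Tarski–Vaught test). -/
def IsElemSubset (L : FirstOrder.Language.{u,u}) [L.Structure Ω] (M : Set Ω) : Prop :=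
  ∀ (k : ℕ) (φ : L.Formula (Fin 1 ⊕ Fin k)) (c : Fin k → Ω), (∀ i, c i ∈ M) →
    (∃ x : Ω, φ.Realize (Sum.elim (fun _ => x) c)) →
    ∃ x ∈ M, φ.Realize (Sum.elim (fun _ => x) c)

variable (L Ω)

/-- The (theory of the) monster model is dependent: no formula has the
independence property. -/
def IsDependent : Prop :=
  ¬ ∃ (m k : ℕ) (φ : L.Formula (Fin m ⊕ Fin k)) (b : ℕ → Fin k → Ω),
    ∀ S : Set ℕ, ∀ F : Finset ℕ, ∃ x : Fin m → Ω,
      ∀ n ∈ F, (φ.Realize (Sum.elim x (b n)) ↔ n ∈ S)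

/-- The (theory of the) monster model is strongly dependent: there is no
infinite array of formulas all of whose "paths" are consistent while each row is
`k_n`-inconsistent. -/
def StronglyDependent : Prop :=
  ¬ ∃ (m : ℕ) (k : ℕ → ℕ) (φ : ∀ n : ℕ, L.Formula (Fin m ⊕ Fin (k n)))
      (ι : Type u) (_ : Infinite ι) (a : (n : ℕ) → ι → Fin (k n) → Ω) (kb : ℕ → ℕ),
    (∀ η : ℕ → ι, ∀ F : Finset ℕ, ∃ x : Fin m → Ω,
        ∀ n ∈ F, (φ n).Realize (Sum.elim x (a n (η n)))) ∧
    (∀ n : ℕ, ∀ s : Finset ι, s.card = kb n →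
        ¬ ∃ x : Fin m → Ω, ∀ α ∈ s, (φ n).Realize (Sum.elim x (a n α)))


variable {Ω}

/-- `C` is full over `A`: every complete type over `A` in finitely many variables
is realized by a tuple from `C`. -/
def FullOver (C A : Set Ω) : Prop :=
  ∀ (n : ℕ) (b : Fin n → Ω), ∃ c : Fin n → Ω, (∀ i, c i ∈ C) ∧
    ∀ (k : ℕ) (ψ : L.Formula (Fin n ⊕ Fin k)) (a : Fin k → Ω), (∀ i, a i ∈ A) →
      (ψ.Realize (Sum.elim b a) ↔ ψ.Realize (Sum.elim c a))

/-- `def(D)` for an ultrafilter on `m`-tuples from `A`. -/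
def DefSetT (A : Set Ω) (m : ℕ) (D : Ultrafilter (Fin m → ↥A)) :
    Set (Set (Fin m → ↥A)) :=
  {X | X ∈ D ∧ ∃ (k : ℕ) (ψ : L.Formula (Fin m ⊕ Fin k)) (c : Fin k → Ω),
    {x : Fin m → ↥A | ψ.Realize (Sum.elim (fun i => ((x i : Ω))) c)} ∈ D ∧
    {x : Fin m → ↥A | ψ.Realize (Sum.elim (fun i => ((x i : Ω))) c)} ⊆ X}

/-- Claim t.1B(3): if `C` is full over `A` and `Av(C,D₁) = Av(C,D₂)` then
`def(D₁) = def(D₂)`. -/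
theorem defSet_eq_of_average_eq (A C : Set Ω) (hAC : A ⊆ C) (hfull : FullOver L C A)
    (m : ℕ) (D₁ D₂ : Ultrafilter (Fin m → ↥A))
    (havg : ∀ (k : ℕ) (φ : L.Formula (Fin m ⊕ Fin k)) (c : Fin k → Ω), (∀ i, c i ∈ C) →
      ({x : Fin m → ↥A | φ.Realize (Sum.elim (fun i => ((x i : Ω))) c)} ∈ D₁ ↔
        {x : Fin m → ↥A | φ.Realize (Sum.elim (fun i => ((x i : Ω))) c)} ∈ D₂)) :
    DefSetT L A m D₁ = DefSetT L A m D₂ := by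
  have key : ∀ (E₁ E₂ : Ultrafilter (Fin m → ↥A)),
      (∀ (k : ℕ) (φ : L.Formula (Fin m ⊕ Fin k)) (c : Fin k → Ω), (∀ i, c i ∈ C) →
        ({x : Fin m → ↥A | φ.Realize (Sum.elim (fun i => ((x i : Ω))) c)} ∈ E₁ ↔
          {x : Fin m → ↥A | φ.Realize (Sum.elim (fun i => ((x i : Ω))) c)} ∈ E₂)) →
      DefSetT L A m E₁ ⊆ DefSetT L A m E₂ := by
    intro E₁ E₂ hav X hX
    obtain ⟨hXD, k, ψ, c, hS, hSX⟩ := hX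
    obtain ⟨c', hc'C, hc'⟩ := hfull k c
    have comp : ∀ (u : Fin k → Ω) (v : Fin m → Ω),
        (Sum.elim u v) ∘ (Sum.elim Sum.inr Sum.inl : Fin m ⊕ Fin k → Fin k ⊕ Fin m)
          = Sum.elim v u := by
      intro u v; funext z; cases z <;> rfl
    have hset : {x : Fin m → ↥A | ψ.Realize (Sum.elim (fun i => ((x i : Ω))) c)} =
        {x : Fin m → ↥A | ψ.Realize (Sum.elim (fun i => ((x i : Ω))) c')} := by
      ext x
      have h := hc' m (ψ.relabel (Sum.elim Sum.inr Sum.inl)) (fun i => (x i : Ω))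
        (fun i => (x i).2)
      simp only [Formula.realize_relabel, comp] at h
      exact h
    rw [hset] at hS hSX
    have hS₂ := (hav k ψ c' hc'C).mp hS
    exact ⟨E₂.toFilter.mem_of_superset hS₂ hSX, k, ψ, c', hS₂, hSX⟩
  exact Set.Subset.antisymm (key D₁ D₂ havg)
    (key D₂ D₁ fun k φ c h => (havg k φ c h).symm)
end

section
/- The theory T = Th(ωω, (E¹_n)_{n<ω}), where η E¹_n ν iff η(n) = ν(n), is stable but not strongly dependent. -/
open FirstOrder FirstOrder.Language Set Cardinal

universe u

variable (L : FirstOrder.Language.{u, u}) (Ω : Type u) [L.Structure Ω]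

variable {L Ω}

variable (L Ω)

variable {Ω}

/-- The order property for a formula in `Ω` (instability of `Th(Ω)`). -/
def HasOrderProp (L : FirstOrder.Language.{u,u}) (Ω : Type u) [L.Structure Ω] : Prop :=
  ∃ (m k : ℕ) (φ : L.Formula (Fin m ⊕ Fin k)),
    ∀ n : ℕ, ∃ (a : Fin n → Fin m → Ω) (b : Fin n → Fin k → Ω),
      ∀ i j : Fin n, (φ.Realize (Sum.elim (a i) (b j)) ↔ i ≤ j)

/-- The relations of the language: countably many binary relations `E¹_n`. -/
def Rel5 : ℕ → Type
  | 2 => ℕ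
  | _ => Empty

/-- The language with countably many binary relation symbols. -/
def L5 : FirstOrder.Language.{0, 0} := ⟨fun _ => Empty, Rel5⟩

/-- The structure `(ωω, (E¹_n)_{n<ω})` where `η E¹_n ν ↔ η(n) = ν(n)`. -/
instance : L5.Structure (ℕ → ℕ) where
  funMap := fun {n} f _ => Empty.elim f
  RelMap := fun {n} r x =>
    match n, r with
    | 2, i => x 0 i = x 1 i
    | 0, r => Empty.elim r
    | 1, r => Empty.elim r
    | (_ + 3), r => Empty.elim r

open Classical in
/-- Equality pattern agreement (globally and at coordinates in `N`). -/
def Pat (N : Finset ℕ) {β : Type} (V V' : β → ℕ → ℕ) : Prop :=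
  ∀ s t : β, (V s = V t ↔ V' s = V' t) ∧ ∀ ν ∈ N, (V s ν = V t ν ↔ V' s ν = V' t ν)

lemma Pat.symm {N : Finset ℕ} {β : Type} {V V' : β → ℕ → ℕ} (h : Pat N V V') :
    Pat N V' V := fun s t => ⟨(h s t).1.symm, fun ν hν => ((h s t).2 ν hν).symm⟩

lemma Pat.mono {N N' : Finset ℕ} {β : Type} {V V' : β → ℕ → ℕ} (h : Pat N V V')
    (hsub : N' ⊆ N) : Pat N' V V' :=
  fun s t => ⟨(h s t).1, fun ν hν => (h s t).2 ν (hsub hν)⟩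

lemma Pat.comp {N : Finset ℕ} {β γ : Type} {V V' : β → ℕ → ℕ} (h : Pat N V V')
    (u : γ → β) : Pat N (V ∘ u) (V' ∘ u) := fun s t => h (u s) (u t)

/-- Every term of `L5` is a variable. -/
lemma term_is_var {γ : Type} (t : L5.Term γ) : ∃ s, ∀ (v : γ → ℕ → ℕ), t.realize v = v s := by
  cases t with
  | var s => exact ⟨s, fun v => rfl⟩
  | func f ts => exact Empty.elim f

open Classical in
/-- Extension of a pattern-agreement pair by one more element. -/
lemma pat_extend {β : Type} [Finite β] (N : Finset ℕ) (V V' : β → ℕ → ℕ)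
    (h : Pat N V V') (x : ℕ → ℕ) :
    ∃ x', Pat N (Sum.elim V (fun _ : Unit => x)) (Sum.elim V' (fun _ : Unit => x')) := by
  have : Fintype β := Fintype.ofFinite β
  by_cases hA : ∃ s₀, x = V s₀
  · obtain ⟨s₀, rfl⟩ := hA
    refine ⟨V' s₀, fun s t => ?_⟩
    cases s with
    | inl s =>
      cases t with
      | inl t => exact h s t
      | inr _ => exact ⟨(h s s₀).1, fun ν hν => (h s s₀).2 ν hν⟩
    | inr _ =>
      cases t with
      | inl t => exact ⟨(h s₀ t).1, fun ν hν => (h s₀ t).2 ν hν⟩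
      | inr _ => exact ⟨by simp, fun ν hν => by simp⟩
  · push_neg at hA
    -- fresh values
    obtain ⟨ν₀, hν₀⟩ := Infinite.exists_notMem_finset N
    have hfresh : ∀ ν : ℕ, ∃ y : ℕ, ∀ s : β, y ≠ V' s ν := by
      intro ν
      obtain ⟨y, hy⟩ := Infinite.exists_notMem_finset
        (Finset.univ.image (fun s : β => V' s ν))
      exact ⟨y, fun s hs => hy (Finset.mem_image.2 ⟨s, Finset.mem_univ s, hs.symm⟩)⟩
    choose fr hfr using hfresh
    set x' : ℕ → ℕ := fun ν =>
      if ν ∈ N then (if hw : ∃ s, V s ν = x ν then V' hw.choose ν else fr ν)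
      else (if ν = ν₀ then fr ν else 0) with hx'
    have hglob : ∀ t : β, x' ≠ V' t := by
      intro t ht
      have : x' ν₀ = V' t ν₀ := congrFun ht ν₀
      rw [hx'] at this
      simp only [hν₀, if_neg, if_pos rfl, if_true] at this
      · exact hfr ν₀ t (by simpa using this)
    have hcoord : ∀ ν ∈ N, ∀ t : β, (x ν = V t ν ↔ x' ν = V' t ν) := by
      intro ν hν t
      rw [hx']
      simp only [hν, if_pos]
      by_cases hw : ∃ s, V s ν = x ν
      · simp only [dif_pos hw]
        have hs₀ := hw.choose_spec
        constructor
        · intro hxt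
          exact ((h hw.choose t).2 ν hν).1 (hs₀.trans hxt)
        · intro hxt
          exact hs₀.symm.trans (((h hw.choose t).2 ν hν).2 hxt)
      · simp only [dif_neg hw]
        constructor
        · intro hxt; exact absurd hxt.symm (fun e => hw ⟨t, e⟩)
        · intro hxt; exact absurd hxt (hfr ν t)
    refine ⟨x', fun s t => ?_⟩
    cases s with
    | inl s =>
      cases t with
      | inl t => exact h s t
      | inr _ =>
        refine ⟨?_, fun ν hν => ?_⟩
        · simp only [Sum.elim_inl, Sum.elim_inr]
          constructor
          · intro e; exact absurd e.symm (hA s)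
          · intro e; exact absurd e.symm (hglob s)
        · simp only [Sum.elim_inl, Sum.elim_inr]
          rw [eq_comm, hcoord ν hν s, eq_comm]
    | inr _ =>
      cases t with
      | inl t =>
        refine ⟨?_, fun ν hν => ?_⟩
        · simp only [Sum.elim_inl, Sum.elim_inr]
          constructor
          · intro e; exact absurd e (hA t)
          · intro e; exact absurd e (hglob t)
        · simp only [Sum.elim_inl, Sum.elim_inr]
          exact hcoord ν hν t
      | inr _ => exact ⟨by simp, fun ν hν => by simp⟩

/-- The map realigning `α ⊕ Fin (ℓ+1)` with `(α ⊕ Fin ℓ) ⊕ Unit`. -/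
def uMap {α : Type} {ℓ : ℕ} : α ⊕ Fin (ℓ + 1) → (α ⊕ Fin ℓ) ⊕ Unit :=
  Sum.elim (fun a => Sum.inl (Sum.inl a))
    (fun i => Fin.lastCases (Sum.inr ()) (fun j => Sum.inl (Sum.inr j)) i)

lemma uMap_spec {α : Type} {ℓ : ℕ} (v : α → ℕ → ℕ) (xs : Fin ℓ → ℕ → ℕ) (x : ℕ → ℕ) :
    Sum.elim v (Fin.snoc xs x) =
      (Sum.elim (Sum.elim v xs) (fun _ : Unit => x)) ∘ uMap := by
  funext s
  cases s with
  | inl a => rfl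
  | inr i =>
    refine Fin.lastCases ?_ (fun j => ?_) i <;> simp [uMap, Fin.snoc_castSucc]

/-- Truth of an `L5`-formula only depends on the equality pattern of the assignment,
globally and at the finitely many coordinates mentioned by the formula. -/
lemma pat_realize {α : Type} [Finite α] :
    ∀ {ℓ : ℕ} (φ : L5.BoundedFormula α ℓ), ∃ N : Finset ℕ,
      ∀ (v v' : α → ℕ → ℕ) (xs xs' : Fin ℓ → ℕ → ℕ),
        Pat N (Sum.elim v xs) (Sum.elim v' xs') → (φ.Realize v xs ↔ φ.Realize v' xs') := by
  intro ℓ φ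
  induction φ with
  | falsum => exact ⟨∅, fun _ _ _ _ _ => Iff.rfl⟩
  | @equal ℓ t₁ t₂ =>
    obtain ⟨s₁, hs₁⟩ := term_is_var t₁
    obtain ⟨s₂, hs₂⟩ := term_is_var t₂
    refine ⟨∅, fun v v' xs xs' h => ?_⟩
    show t₁.realize (Sum.elim v xs) = t₂.realize (Sum.elim v xs) ↔
      t₁.realize (Sum.elim v' xs') = t₂.realize (Sum.elim v' xs')
    rw [hs₁, hs₂, hs₁, hs₂]
    exact (h s₁ s₂).1
  | @rel ℓ ar R ts =>
    match ar, R with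
    | 0, R => exact Empty.elim R
    | 1, R => exact Empty.elim R
    | (n + 3), R => exact Empty.elim R
    | 2, R =>
      obtain ⟨s₁, hs₁⟩ := term_is_var (ts 0)
      obtain ⟨s₂, hs₂⟩ := term_is_var (ts 1)
      refine ⟨{R}, fun v v' xs xs' h => ?_⟩
      show Structure.RelMap R (fun i => (ts i).realize (Sum.elim v xs)) ↔
        Structure.RelMap R (fun i => (ts i).realize (Sum.elim v' xs'))
      show (ts 0).realize (Sum.elim v xs) R = (ts 1).realize (Sum.elim v xs) R ↔
        (ts 0).realize (Sum.elim v' xs') R = (ts 1).realize (Sum.elim v' xs') R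
      rw [hs₁, hs₂, hs₁, hs₂]
      exact (h s₁ s₂).2 R (Finset.mem_singleton_self R)
  | @imp ℓ f g ihf ihg =>
    obtain ⟨N₁, h₁⟩ := ihf
    obtain ⟨N₂, h₂⟩ := ihg
    refine ⟨N₁ ∪ N₂, fun v v' xs xs' h => ?_⟩
    simp only [BoundedFormula.realize_imp]
    exact imp_congr (h₁ v v' xs xs' (h.mono Finset.subset_union_left))
      (h₂ v v' xs xs' (h.mono Finset.subset_union_right))
  | @all ℓ f ih =>
    obtain ⟨N, hN⟩ := ih
    refine ⟨N, fun v v' xs xs' h => ?_⟩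
    simp only [BoundedFormula.realize_all]
    constructor
    · intro hall x'
      obtain ⟨x, hx⟩ := pat_extend N (Sum.elim v' xs') (Sum.elim v xs) h.symm x'
      have hpat : Pat N (Sum.elim v (Fin.snoc xs x)) (Sum.elim v' (Fin.snoc xs' x')) := by
        rw [uMap_spec v xs x, uMap_spec v' xs' x']
        exact (hx.symm).comp uMap
      exact (hN v v' _ _ hpat).1 (hall x)
    · intro hall x
      obtain ⟨x', hx'⟩ := pat_extend N (Sum.elim v xs) (Sum.elim v' xs') h x
      have hpat : Pat N (Sum.elim v (Fin.snoc xs x)) (Sum.elim v' (Fin.snoc xs' x')) := by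
        rw [uMap_spec v xs x, uMap_spec v' xs' x']
        exact hx'.comp uMap
      exact (hN v v' _ _ hpat).2 (hall x')

lemma pat_realize_formula {α : Type} [Finite α] (φ : L5.Formula α) :
    ∃ N : Finset ℕ, ∀ (v v' : α → ℕ → ℕ),
      Pat N v v' → (φ.Realize v ↔ φ.Realize v') := by
  obtain ⟨N, hN⟩ := pat_realize (ℓ := 0) φ
  refine ⟨N, fun v v' h => ?_⟩
  unfold Formula.Realize
  refine hN v v' _ _ ?_
  intro s t
  cases s with
  | inl s =>
    cases t with
    | inl t => exact h s t
    | inr i => exact i.elim0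
  | inr i => exact i.elim0

/-- A function is constant or injective. -/
def ConstOrInj {n : ℕ} {X : Type} (f : Fin n → X) : Prop :=
  (∀ i j, f i = f j) ∨ Function.Injective f

lemma constOrInj_comp {n m : ℕ} {X : Type} {f : Fin n → X} (h : ConstOrInj f)
    (e : Fin m ↪o Fin n) : ConstOrInj (f ∘ e) := by
  rcases h with h | h
  · exact Or.inl fun i j => h (e i) (e j)
  · exact Or.inr (h.comp e.injective)

open Classical in
/-- From `t*t` indices one can extract `t` along which `f` is constant or injective. -/
lemma refine_step {t n : ℕ} {X : Type} (htn : t * t ≤ n) (f : Fin n → X) :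
    ∃ e : Fin t ↪o Fin n, ConstOrInj (f ∘ e) := by
  classical
  set im : Finset X := Finset.univ.image f with him
  by_cases hc : t ≤ im.card
  · -- transversal: injective case
    have hg : ∀ y ∈ im, ∃ i : Fin n, f i = y := by
      intro y hy
      obtain ⟨i, _, hi⟩ := Finset.mem_image.1 hy
      exact ⟨i, hi⟩
    choose g hgs using hg
    obtain ⟨s, hsub, hcard⟩ := Finset.exists_subset_card_eq hc
    set s' : Finset (Fin n) := s.attach.image (fun y => g y.1 (hsub y.2)) with hs'
    have hinj : ∀ y₁ : {x // x ∈ s}, ∀ y₂ : {x // x ∈ s},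
        g y₁.1 (hsub y₁.2) = g y₂.1 (hsub y₂.2) → y₁ = y₂ := by
      intro y₁ y₂ he
      have := (hgs y₁.1 (hsub y₁.2)).symm.trans (he ▸ hgs y₂.1 (hsub y₂.2))
      exact Subtype.ext this
    have hcard' : s'.card = t := by
      rw [hs', Finset.card_image_of_injective _ (fun y₁ y₂ => hinj y₁ y₂),
        Finset.card_attach, hcard]
    refine ⟨s'.orderEmbOfFin hcard', Or.inr ?_⟩
    intro i j hij
    have hi := Finset.orderEmbOfFin_mem s' hcard' i
    have hj := Finset.orderEmbOfFin_mem s' hcard' j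
    obtain ⟨y₁, _, hy₁⟩ := Finset.mem_image.1 hi
    obtain ⟨y₂, _, hy₂⟩ := Finset.mem_image.1 hj
    simp only [Function.comp_apply] at hij
    rw [← hy₁, ← hy₂, hgs, hgs] at hij
    have : y₁ = y₂ := Subtype.ext hij
    have : s'.orderEmbOfFin hcard' i = s'.orderEmbOfFin hcard' j := by
      rw [← hy₁, ← hy₂, this]
    exact (s'.orderEmbOfFin hcard').injective this
  · -- big fiber: constant case
    push_neg at hc
    rcases Nat.eq_zero_or_pos t with rfl | ht
    · refine ⟨⟨⟨Fin.elim0, fun i => i.elim0⟩, fun {i} => i.elim0⟩, Or.inl fun i => i.elim0⟩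
    have hlt : im.card * (t - 1) < (Finset.univ : Finset (Fin n)).card := by
      have h1 : im.card ≤ t - 1 := by omega
      have : im.card * (t - 1) ≤ (t - 1) * (t - 1) :=
        Nat.mul_le_mul_right _ h1
      have h2 : (t - 1) * (t - 1) < t * t :=
        Nat.mul_lt_mul_of_lt_of_le (by omega) (by omega) (by omega)
      simp only [Finset.card_univ, Fintype.card_fin]
      omega
    obtain ⟨y, _, hy⟩ := Finset.exists_lt_card_fiber_of_mul_lt_card_of_maps_to
      (fun i _ => Finset.mem_image_of_mem f (Finset.mem_univ i)) hlt
    have hy' : t ≤ (Finset.univ.filter fun i => f i = y).card := by omega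
    obtain ⟨s, hsub, hcard⟩ := Finset.exists_subset_card_eq hy'
    refine ⟨s.orderEmbOfFin hcard, Or.inl fun i j => ?_⟩
    have hi := hsub (Finset.orderEmbOfFin_mem s hcard i)
    have hj := hsub (Finset.orderEmbOfFin_mem s hcard j)
    rw [Finset.mem_filter] at hi hj
    simp only [Function.comp_apply]
    rw [hi.2, hj.2]

/-- Simultaneous refinement of `C` functions. -/
lemma refineAll {X : Type} :
    ∀ (C : ℕ) (t n : ℕ), t ^ (2 ^ C) ≤ n → ∀ (fam : Fin C → Fin n → X),
      ∃ e : Fin t ↪o Fin n, ∀ c, ConstOrInj (fam c ∘ e) := by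
  intro C
  induction C with
  | zero =>
    intro t n h fam
    rw [pow_zero, pow_one] at h
    exact ⟨OrderEmbedding.ofStrictMono (fun i => Fin.castLE h i)
      (fun i j hij => by simpa using hij), fun c => c.elim0⟩
  | succ C ih =>
    intro t n h fam
    have hpow : (t * t) ^ (2 ^ C) ≤ n := by
      rw [← pow_two, ← pow_mul]
      calc t ^ (2 * 2 ^ C) = t ^ (2 ^ (C + 1)) := by rw [pow_succ, mul_comm]
        _ ≤ n := h
    obtain ⟨e₁, he₁⟩ := ih (t * t) n hpow (fun c => fam c.castSucc)
    obtain ⟨e₂, he₂⟩ := refine_step (le_refl (t * t)) (fam (Fin.last C) ∘ e₁)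
    refine ⟨e₂.trans e₁, fun c => ?_⟩
    induction c using Fin.lastCases with
    | last =>
      show ConstOrInj (fam (Fin.last C) ∘ (e₂.trans e₁))
      have : fam (Fin.last C) ∘ e₂.trans e₁ = (fam (Fin.last C) ∘ e₁) ∘ e₂ := rfl
      rw [this]; exact he₂
    | cast j =>
      show ConstOrInj (fam j.castSucc ∘ (e₂.trans e₁))
      have : fam j.castSucc ∘ e₂.trans e₁ = (fam j.castSucc ∘ e₁) ∘ e₂ := rfl
      rw [this]
      exact constOrInj_comp (he₁ j) e₂

/-- Index type for "cross" equality bits. -/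
abbrev CRI (m k : ℕ) (N : Finset ℕ) := (Fin m × Fin k) × Option {ν // ν ∈ N}
/-- Index type for "internal" equality bits on the second tuple. -/
abbrev BII (k : ℕ) (N : Finset ℕ) := (Fin k × Fin k) × Option {ν // ν ∈ N}

def Ffun {m k n : ℕ} {N : Finset ℕ} (a : Fin n → Fin m → ℕ → ℕ) (ρ : CRI m k N)
    (i : Fin n) : ℕ → ℕ :=
  match ρ.2 with
  | none => a i ρ.1.1
  | some ν => fun _ => a i ρ.1.1 ν.1

def Gfun {m k n : ℕ} {N : Finset ℕ} (b : Fin n → Fin k → ℕ → ℕ) (ρ : CRI m k N)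
    (j : Fin n) : ℕ → ℕ :=
  match ρ.2 with
  | none => b j ρ.1.2
  | some ν => fun _ => b j ρ.1.2 ν.1

open Classical in
noncomputable def Hfun {k n : ℕ} {N : Finset ℕ} (b : Fin n → Fin k → ℕ → ℕ) (β : BII k N)
    (j : Fin n) : ℕ → ℕ :=
  match β.2 with
  | none => fun _ => if b j β.1.1 = b j β.1.2 then 1 else 0
  | some ν => fun _ => if b j β.1.1 ν.1 = b j β.1.2 ν.1 then 1 else 0

lemma not_inj_two {t : ℕ} {X : Type} (f : Fin t → X) (u w : X)
    (hval : ∀ j, f j = u ∨ f j = w) (ht : 3 ≤ t) : ¬ Function.Injective f := by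
  intro hinj
  have h0 : (⟨0, by omega⟩ : Fin t) ≠ ⟨1, by omega⟩ := by simp [Fin.ext_iff]
  have h1 : (⟨0, by omega⟩ : Fin t) ≠ ⟨2, by omega⟩ := by simp [Fin.ext_iff]
  have h2 : (⟨1, by omega⟩ : Fin t) ≠ ⟨2, by omega⟩ := by simp [Fin.ext_iff]
  rcases hval ⟨0, by omega⟩ with e0 | e0 <;> rcases hval ⟨1, by omega⟩ with e1 | e1 <;>
    rcases hval ⟨2, by omega⟩ with e2 | e2 <;>
    first
      | exact h0 (hinj (e0.trans e1.symm))
      | exact h1 (hinj (e0.trans e2.symm))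
      | exact h2 (hinj (e1.trans e2.symm))

lemma iteEqIte' {P Q : Prop} [Decidable P] [Decidable Q]
    (h : (if P then (1 : ℕ) else 0) = (if Q then 1 else 0)) : P ↔ Q := by
  by_cases hP : P <;> by_cases hQ : Q <;> simp [hP, hQ] at h ⊢

lemma const_eq_const {u v : ℕ} : ((fun _ => u : ℕ → ℕ) = fun _ => v) ↔ u = v :=
  ⟨fun h => congrFun h 0, fun h => by rw [h]⟩

theorem notOP : ¬ HasOrderProp L5 (ℕ → ℕ) := by
  rintro ⟨m, k, φ, hφ⟩
  classical
  obtain ⟨N, hN⟩ := pat_realize_formula φ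
  set c := Fintype.card (CRI m k N) with hc
  set t := 2 * c + 3 with ht
  set C := Fintype.card (CRI m k N ⊕ BII k N) with hC
  set n := t ^ 2 ^ C with hn
  obtain ⟨a, b, hlad⟩ := hφ n
  -- the family of functions to refine
  set fam : (CRI m k N ⊕ BII k N) → Fin n → (ℕ → ℕ) :=
    Sum.elim (Gfun b) (Hfun b) with hfam
  set eqD := Fintype.equivFin (CRI m k N ⊕ BII k N) with heqD
  obtain ⟨e, he⟩ := refineAll C t n le_rfl (fun c' => fam (eqD.symm c'))
  have heD : ∀ d, ConstOrInj (fam d ∘ e) := by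
    intro d
    have := he (eqD d)
    simpa using this
  set istar : Fin t := ⟨c + 1, by omega⟩ with histar
  -- the set of "bad" indices
  set Bad : Finset (Fin t) := Finset.univ.filter (fun j =>
    ∃ ρ : CRI m k N, Function.Injective (Gfun b ρ ∘ e) ∧
      Ffun a ρ (e istar) = Gfun b ρ (e j)) with hBad
  have hBadCard : Bad.card ≤ c := by
    have : Bad.card ≤ (Finset.univ.image (Option.some : CRI m k N → _)).card := by
      apply Finset.card_le_card_of_injOn (fun j =>
        if h : ∃ ρ : CRI m k N, Function.Injective (Gfun b ρ ∘ e) ∧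
          Ffun a ρ (e istar) = Gfun b ρ (e j) then some h.choose else none)
      · intro j hj
        rw [hBad, Finset.coe_filter, Set.mem_setOf_eq] at hj
        simp only [Finset.mem_coe]
        rw [dif_pos hj.2]
        exact Finset.mem_image_of_mem _ (Finset.mem_univ _)
      · intro j₁ hj₁ j₂ hj₂ hf
        rw [hBad, Finset.coe_filter, Set.mem_setOf_eq] at hj₁ hj₂
        simp only [dif_pos hj₁.2, dif_pos hj₂.2, Option.some_inj] at hf
        have s₁ := hj₁.2.choose_spec
        have s₂ := hj₂.2.choose_spec
        rw [hf] at s₁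
        have := s₁.2.symm.trans s₂.2
        exact s₂.1 this
    rw [Finset.card_image_of_injective _ (Option.some_injective _), Finset.card_univ] at this
    exact this
  -- pick good indices above and below istar
  have hjp : ∃ jp : Fin t, istar < jp ∧ jp ∉ Bad := by
    by_contra hcon
    push_neg at hcon
    have hsub : Finset.Ioi istar ⊆ Bad := fun j hj => hcon j (Finset.mem_Ioi.1 hj)
    have := Finset.card_le_card hsub
    rw [Fin.card_Ioi] at this
    simp only [histar] at this
    omega
  have hjm : ∃ jm : Fin t, jm < istar ∧ jm ∉ Bad := by
    by_contra hcon
    push_neg at hcon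
    have hsub : Finset.Iio istar ⊆ Bad := fun j hj => hcon j (Finset.mem_Iio.1 hj)
    have := Finset.card_le_card hsub
    rw [Fin.card_Iio] at this
    simp only [histar] at this
    omega
  obtain ⟨jp, hjp1, hjp2⟩ := hjp
  obtain ⟨jm, hjm1, hjm2⟩ := hjm
  -- key fact: any cross bit agrees between jp and jm
  have hcross : ∀ (ρ : CRI m k N),
      (Ffun a ρ (e istar) = Gfun b ρ (e jp) ↔ Ffun a ρ (e istar) = Gfun b ρ (e jm)) := by
    intro ρ
    rcases heD (Sum.inl ρ) with hco | hin
    · have : Gfun b ρ (e jp) = Gfun b ρ (e jm) := hco jp jm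
      rw [this]
    · constructor
      · intro heq
        exact absurd (by rw [hBad, Finset.mem_filter]; exact ⟨Finset.mem_univ _, ρ, hin, heq⟩) hjp2
      · intro heq
        exact absurd (by rw [hBad, Finset.mem_filter]; exact ⟨Finset.mem_univ _, ρ, hin, heq⟩) hjm2
  -- internal bits on b agree between jp and jm
  have hbi : ∀ (β : BII k N), Hfun b β (e jp) = Hfun b β (e jm) := by
    intro β
    rcases heD (Sum.inr β) with hco | hin
    · exact hco jp jm
    · exfalso
      refine not_inj_two (Hfun b β ∘ e) (fun _ => 1) (fun _ => 0) ?_ (by omega) hin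
      intro j
      show Hfun b β (e j) = _ ∨ Hfun b β (e j) = _
      cases hβ : β.2 with
      | none =>
        by_cases hb : b (e j) β.1.1 = b (e j) β.1.2
        · left; simp only [Hfun, hβ, if_pos hb]
        · right; simp only [Hfun, hβ, if_neg hb]
      | some ν =>
        by_cases hb : b (e j) β.1.1 ν.1 = b (e j) β.1.2 ν.1
        · left; simp only [Hfun, hβ, if_pos hb]
        · right; simp only [Hfun, hβ, if_neg hb]
  -- the pattern agreement
  have hpat : Pat N (Sum.elim (a (e istar)) (b (e jp))) (Sum.elim (a (e istar)) (b (e jm))) := by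
    intro s t'
    cases s with
    | inl s =>
      cases t' with
      | inl t' => exact ⟨Iff.rfl, fun ν _ => Iff.rfl⟩
      | inr t' =>
        refine ⟨?_, fun ν hν => ?_⟩
        · simpa [Ffun, Gfun] using hcross ((s, t'), none)
        · have := hcross ((s, t'), some ⟨ν, hν⟩)
          simp only [Ffun, Gfun] at this
          simpa [const_eq_const] using this
    | inr t₁ =>
      cases t' with
      | inl s =>
        refine ⟨?_, fun ν hν => ?_⟩
        · have := hcross ((s, t₁), none)
          simp only [Ffun, Gfun] at this
          simp only [Sum.elim_inl, Sum.elim_inr]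
          exact ⟨fun h => (this.1 h.symm).symm, fun h => (this.2 h.symm).symm⟩
        · have := hcross ((s, t₁), some ⟨ν, hν⟩)
          simp only [Ffun, Gfun, const_eq_const] at this
          simp only [Sum.elim_inl, Sum.elim_inr]
          exact ⟨fun h => (this.1 h.symm).symm, fun h => (this.2 h.symm).symm⟩
      | inr t₂ =>
        refine ⟨?_, fun ν hν => ?_⟩
        · have := congrFun (hbi ((t₁, t₂), none)) 0
          simp only [Hfun] at this
          simp only [Sum.elim_inr]
          exact iteEqIte' this
        · have := congrFun (hbi ((t₁, t₂), some ⟨ν, hν⟩)) 0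
          simp only [Hfun] at this
          simp only [Sum.elim_inr]
          exact iteEqIte' this
  have hiff := hN (Sum.elim (a (e istar)) (b (e jp))) (Sum.elim (a (e istar)) (b (e jm))) hpat
  have h1 : φ.Realize (Sum.elim (a (e istar)) (b (e jp))) :=
    (hlad _ _).2 (le_of_lt (e.strictMono hjp1))
  have h2 := (hlad (e istar) (e jm)).1 (hiff.1 h1)
  exact absurd h2 (not_le.2 (e.strictMono hjm1))

def eform (n : ℕ) : L5.Formula (Fin 1 ⊕ Fin 1) :=
  Relations.formula₂ (show L5.Relations 2 from n) (Term.var (Sum.inl 0)) (Term.var (Sum.inr 0))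

lemma eform_realize (n : ℕ) (x y : Fin 1 → (ℕ → ℕ)) :
    (eform n).Realize (Sum.elim x y) ↔ x 0 n = y 0 n := by
  rw [eform, Formula.realize_rel₂]
  simp [Term.realize]
  rfl

theorem notSD : ¬ StronglyDependent L5 (ℕ → ℕ) := by
  intro h
  apply h
  refine ⟨1, fun _ => 1, fun n => eform n, ℕ, inferInstance,
    fun n α _ => fun _ => α, fun _ => 2, ?_, ?_⟩
  · intro η F
    refine ⟨fun _ => η, fun n _ => ?_⟩
    rw [eform_realize]
  · intro n s hs ⟨x, hx⟩
    rw [Finset.card_eq_two] at hs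
    obtain ⟨α, β, hne, rfl⟩ := hs
    have h1 := hx α (by simp)
    have h2 := hx β (by simp)
    rw [eform_realize] at h1 h2
    simp only [] at h1 h2
    exact hne (h1.symm.trans h2)

/-- Claim ss.2(3): `Th(ωω, (E¹_n)_n)` is stable but not strongly dependent. -/
theorem thE1_stable_not_strongly_dependent :
    ¬ HasOrderProp L5 (ℕ → ℕ) ∧ ¬ StronglyDependent L5 (ℕ → ℕ) :=
  ⟨notOP, notSD⟩
end

section
/- Assume T is dependent. If p ∈ Sᵐ(A) does not divide over B ⊆ A, then p does not split strongly over B: there is no infinite indiscernible sequence ⟨b̄_n : n < ω⟩ over B and formula φ such that φ(x̄,b̄₀) ∧ ¬φ(x̄,b̄₁) ∈ p. -/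
open FirstOrder FirstOrder.Language Set Cardinal

universe u

variable (L : FirstOrder.Language.{u, u}) (Ω : Type u) [L.Structure Ω]

variable {L Ω}

variable (L Ω)

variable {Ω}

/-! ### Auxiliary material for the proof -/

/-- the half-index of an index in `Fin (2*n)`. -/
def halfIdx {n : ℕ} (i : Fin (2 * n)) : Fin n :=
  ⟨i.1 / 2, by have := i.isLt; omega⟩

/-- doubling of an index map. -/
def duMap {n : ℕ} (u : Fin n → ℕ) (i : Fin (2 * n)) : ℕ :=
  2 * u (halfIdx i) + i.1 % 2

lemma duMap_strictMono {n : ℕ} {u : Fin n → ℕ} (hu : StrictMono u) :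
    StrictMono (duMap u) := by
  intro i j hij
  have hij' : i.1 < j.1 := hij
  unfold duMap
  by_cases h : i.1 / 2 < j.1 / 2
  · have := hu (show halfIdx i < halfIdx j from h)
    omega
  · have h2 : i.1 / 2 = j.1 / 2 := by omega
    have h3 : halfIdx i = halfIdx j := Fin.ext h2
    rw [h3]; omega

lemma duMap_even {n : ℕ} (u : Fin n → ℕ) (i : Fin n) (h : 2 * i.1 < 2 * n) :
    duMap u ⟨2 * i.1, h⟩ = 2 * u i := by
  have h1 : halfIdx (⟨2 * i.1, h⟩ : Fin (2 * n)) = i :=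
    Fin.ext (show (2 * i.1) / 2 = i.1 by omega)
  unfold duMap
  rw [h1]
  show 2 * u i + (2 * i.1) % 2 = 2 * u i
  omega

lemma duMap_odd {n : ℕ} (u : Fin n → ℕ) (i : Fin n) (h : 2 * i.1 + 1 < 2 * n) :
    duMap u ⟨2 * i.1 + 1, h⟩ = 2 * u i + 1 := by
  have h1 : halfIdx (⟨2 * i.1 + 1, h⟩ : Fin (2 * n)) = i :=
    Fin.ext (show (2 * i.1 + 1) / 2 = i.1 by omega)
  unfold duMap
  rw [h1]
  show 2 * u i + (2 * i.1 + 1) % 2 = 2 * u i + 1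
  omega

/-- relabelling map that splits a `2r`-tuple variable into two `r`-tuple variables. -/
def dblMap (n r k : ℕ) : (Fin n × Fin (r + r)) ⊕ Fin k → (Fin (2 * n) × Fin r) ⊕ Fin k :=
  Sum.map (fun pr => Fin.addCases
    (fun j => (⟨2 * pr.1.1, by have := pr.1.isLt; omega⟩, j))
    (fun j => (⟨2 * pr.1.1 + 1, by have := pr.1.isLt; omega⟩, j)) pr.2) id

lemma duMap_elim {n r k : ℕ} (b : ℕ → Fin r → Ω) (u : Fin n → ℕ) (d : Fin k → Ω) :
    Sum.elim (fun pr : Fin n × Fin (r + r) =>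
        Fin.addCases (motive := fun _ => Ω) (b (2 * u pr.1)) (b (2 * u pr.1 + 1)) pr.2) d
      = (Sum.elim (fun pr : Fin (2 * n) × Fin r => b (duMap u pr.1) pr.2) d) ∘ dblMap n r k := by
  funext a
  rcases a with ⟨i, j⟩ | j
  · simp only [Sum.elim_inl, Function.comp_apply, dblMap, Sum.map_inl]
    cases j using Fin.addCases with
    | left j0 =>
      rw [Fin.addCases_left, Fin.addCases_left]
      simp only [Sum.elim_inl]
      rw [duMap_even]
    | right j1 =>
      rw [Fin.addCases_right, Fin.addCases_right]
      simp only [Sum.elim_inl]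
      rw [duMap_odd]
  · rfl

/-- The sequence of pairs of consecutive terms of a `B`-indiscernible sequence is
`B`-indiscernible. -/
lemma pair_indiscernible {B : Set Ω} {r : ℕ} {b : ℕ → Fin r → Ω}
    (hind : IndiscernibleOver L B r b) :
    IndiscernibleOver L B (r + r)
      (fun nn => Fin.addCases (motive := fun _ => Ω) (b (2 * nn)) (b (2 * nn + 1))) := by
  intro n k s t hs ht χ d hd
  have key := hind (2 * n) k (duMap s) (duMap t) (duMap_strictMono hs) (duMap_strictMono ht)
    (χ.relabel (dblMap n r k)) d hd
  rw [Formula.realize_relabel, Formula.realize_relabel] at key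
  rw [← duMap_elim b s d, ← duMap_elim b t d] at key
  exact key

/-- Observation 10.3(2): in a dependent theory, a complete type that does not divide
over `B` does not split strongly over `B`. -/
theorem nondividing_implies_no_strong_splitting
    (hdep : IsDependent L Ω) (B A : Set Ω) (hBA : B ⊆ A)
    {m : ℕ} (p : Set (FormPar L Ω m)) (hp : IsCompleteTypeOver A p)
    (hnd : ¬ DividesOver B p) :
    ¬ ∃ (r : ℕ) (b : ℕ → Fin r → Ω) (φ : L.Formula (Fin m ⊕ Fin r)),
      IndiscernibleOver L B r b ∧
      (⟨r, (φ, b 0)⟩ : FormPar L Ω m) ∈ p ∧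
      (⟨r, (BoundedFormula.not φ, b 1)⟩ : FormPar L Ω m) ∈ p := by
  rintro ⟨r, b, φ, hind, hφp, hnφp⟩
  classical
  set ψ : L.Formula (Fin m ⊕ Fin (r + r)) :=
    (φ.relabel (Sum.map id (Fin.castAdd r))) ⊓
      (Formula.relabel (Sum.map id (Fin.natAdd r)) (BoundedFormula.not φ)) with hψdef
  set c : ℕ → Fin (r + r) → Ω :=
    fun nn => Fin.addCases (motive := fun _ => Ω) (b (2 * nn)) (b (2 * nn + 1)) with hcdef
  have hcomp1 : ∀ (x : Fin m → Ω) (u v : Fin r → Ω),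
      (Sum.elim x (Fin.addCases (motive := fun _ => Ω) u v) : Fin m ⊕ Fin (r + r) → Ω) ∘
        Sum.map id (Fin.castAdd r) = Sum.elim x u := by
    intro x u v
    funext a
    rcases a with i | j
    · rfl
    · show Fin.addCases (motive := fun _ => Ω) u v (Fin.castAdd r j) = u j
      rw [Fin.addCases_left]
  have hcomp2 : ∀ (x : Fin m → Ω) (u v : Fin r → Ω),
      (Sum.elim x (Fin.addCases (motive := fun _ => Ω) u v) : Fin m ⊕ Fin (r + r) → Ω) ∘
        Sum.map id (Fin.natAdd r) = Sum.elim x v := by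
    intro x u v
    funext a
    rcases a with i | j
    · rfl
    · show Fin.addCases (motive := fun _ => Ω) u v (Fin.natAdd r j) = v j
      rw [Fin.addCases_right]
  have hψ : ∀ (x : Fin m → Ω) (u v : Fin r → Ω),
      ψ.Realize (Sum.elim x (Fin.addCases (motive := fun _ => Ω) u v)) ↔
        (φ.Realize (Sum.elim x u) ∧ ¬ φ.Realize (Sum.elim x v)) := by
    intro x u v
    rw [hψdef]
    rw [Formula.realize_inf, Formula.realize_relabel, Formula.realize_relabel,
      hcomp1, hcomp2, Formula.realize_not]
  apply hnd
  refine ⟨⟨r + r, (ψ, c 0)⟩, ⟨c, rfl, ?_, ?_⟩, ?_⟩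
  · -- the paired sequence is B-indiscernible
    exact pair_indiscernible L hind
  · -- inconsistency along the paired sequence, by NIP
    rintro ⟨x₀, hx₀⟩
    have hx : ∀ nn : ℕ, φ.Realize (Sum.elim x₀ (b (2 * nn))) ∧
        ¬ φ.Realize (Sum.elim x₀ (b (2 * nn + 1))) := fun nn => (hψ x₀ _ _).mp (hx₀ nn)
    apply hdep
    refine ⟨m, r, φ, b, ?_⟩
    intro S F
    set N : ℕ := F.sup id + 1 with hNdef
    have hFN : ∀ n ∈ F, n < N := by
      intro n hn
      have := Finset.le_sup (f := id) hn
      simp only [id] at this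
      omega
    -- the increasing map picking even indices on S and odd indices off S
    set tt : Fin N → ℕ := fun i => 2 * i.1 + (if (i.1 : ℕ) ∈ S then 0 else 1) with httdef
    have htt : StrictMono tt := by
      intro i j hij
      have hij' : i.1 < j.1 := hij
      simp only [httdef]
      split <;> split <;> omega
    have hss : StrictMono (fun i : Fin N => (i.1 : ℕ)) := fun i j h => h
    -- the formula expressing the consistency pattern
    set χi : Fin N → L.Formula (Fin m ⊕ (Fin N × Fin r)) :=
      fun i => φ.relabel (Sum.map id (fun j => (i, j))) with hχidef
    set Ξ : L.Formula (Fin m ⊕ (Fin N × Fin r)) :=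
      BoundedFormula.iInf
        (fun i : Fin N => if (i.1 : ℕ) ∈ S then χi i else (χi i).not) with hΞdef
    set Θ : L.Formula ((Fin N × Fin r) ⊕ Fin 0) :=
      ((Ξ.relabel (Sum.elim Sum.inr Sum.inl)).iExs (Fin m)).relabel Sum.inl with hΘdef
    have hΞr : ∀ (x : Fin m → Ω) (v : Fin N × Fin r → Ω),
        Ξ.Realize (Sum.elim x v) ↔
          ∀ i : Fin N, if (i.1 : ℕ) ∈ S then φ.Realize (Sum.elim x (fun j => v (i, j)))
            else ¬ φ.Realize (Sum.elim x (fun j => v (i, j))) := by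
      intro x v
      have hcc : ∀ i : Fin N,
          (Sum.elim x v : Fin m ⊕ (Fin N × Fin r) → Ω) ∘ (Sum.map id (fun j => (i, j)))
            = Sum.elim x (fun j => v (i, j)) := by
        intro i
        funext a
        rcases a with a | a <;> rfl
      rw [hΞdef]
      unfold Formula.Realize
      rw [BoundedFormula.realize_iInf]
      constructor
      · intro h i
        have := h i
        split at this <;> split
        · rename_i hS _
          have h2 : (χi i).Realize (Sum.elim x v) := this
          rw [hχidef] at h2
          rw [Formula.realize_relabel, hcc] at h2
          exact h2
        · rename_i hS hS'; exact absurd hS hS'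
        · rename_i hS hS'; exact absurd hS' hS
        · rename_i hS _
          have h2 : ((χi i).not).Realize (Sum.elim x v) := this
          rw [Formula.realize_not, hχidef, Formula.realize_relabel, hcc] at h2
          exact h2
      · intro h i
        have := h i
        split at this <;> split
        · rename_i hS _
          show (χi i).Realize (Sum.elim x v)
          rw [hχidef, Formula.realize_relabel, hcc]
          exact this
        · rename_i hS hS'; exact absurd hS hS'
        · rename_i hS hS'; exact absurd hS' hS
        · rename_i hS _
          show ((χi i).not).Realize (Sum.elim x v)
          rw [Formula.realize_not, hχidef, Formula.realize_relabel, hcc]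
          exact this
    have hΘr : ∀ u : Fin N → ℕ,
        Θ.Realize (Sum.elim (fun pr : Fin N × Fin r => b (u pr.1) pr.2)
            (Fin.elim0 : Fin 0 → Ω)) ↔
          ∃ x : Fin m → Ω, ∀ i : Fin N,
            if (i.1 : ℕ) ∈ S then φ.Realize (Sum.elim x (b (u i)))
              else ¬ φ.Realize (Sum.elim x (b (u i))) := by
      intro u
      rw [hΘdef, Formula.realize_relabel]
      have h0 : (Sum.elim (fun pr : Fin N × Fin r => b (u pr.1) pr.2)
          (Fin.elim0 : Fin 0 → Ω)) ∘ (Sum.inl : (Fin N × Fin r) → (Fin N × Fin r) ⊕ Fin 0)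
            = fun pr : Fin N × Fin r => b (u pr.1) pr.2 := rfl
      rw [h0, Formula.realize_iExs]
      simp only [Formula.realize_relabel, Function.comp_def]
      constructor
      · rintro ⟨x, hxr⟩
        refine ⟨x, ?_⟩
        have hsw : (fun a => Sum.elim (fun pr : Fin N × Fin r => b (u pr.1) pr.2) x
            (Sum.elim Sum.inr Sum.inl a))
              = Sum.elim x (fun pr : Fin N × Fin r => b (u pr.1) pr.2) := by
          funext a; rcases a with a | a <;> rfl
        rw [hsw] at hxr
        have := (hΞr x _).mp hxr
        intro i
        exact this i
      · rintro ⟨x, hxr⟩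
        refine ⟨x, ?_⟩
        have hsw : (fun a => Sum.elim (fun pr : Fin N × Fin r => b (u pr.1) pr.2) x
            (Sum.elim Sum.inr Sum.inl a))
              = Sum.elim x (fun pr : Fin N × Fin r => b (u pr.1) pr.2) := by
          funext a; rcases a with a | a <;> rfl
        rw [hsw]
        exact (hΞr x _).mpr hxr
    -- Θ is realized along the rows picked by tt, witnessed by x₀
    have hstep : Θ.Realize (Sum.elim (fun pr : Fin N × Fin r => b (tt pr.1) pr.2)
        (Fin.elim0 : Fin 0 → Ω)) := by
      rw [hΘr tt]
      refine ⟨x₀, ?_⟩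
      intro i
      by_cases hS : (i.1 : ℕ) ∈ S
      · rw [if_pos hS]
        have h1 : tt i = 2 * i.1 := by simp [httdef, hS]
        rw [h1]
        exact (hx i.1).1
      · rw [if_neg hS]
        have h1 : tt i = 2 * i.1 + 1 := by simp [httdef, hS]
        rw [h1]
        exact (hx i.1).2
    -- transfer by indiscernibility to the identity rows
    have htrans := hind N 0 tt (fun i => i.1) htt hss Θ
      (Fin.elim0 : Fin 0 → Ω) (fun i => i.elim0)
    rw [htrans] at hstep
    rw [hΘr (fun i => i.1)] at hstep
    obtain ⟨x, hxr⟩ := hstep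
    refine ⟨x, ?_⟩
    intro n hn
    have hnN : n < N := hFN n hn
    have := hxr ⟨n, hnN⟩
    by_cases hS : n ∈ S
    · rw [if_pos hS] at this
      exact ⟨fun _ => hS, fun _ => this⟩
    · rw [if_neg hS] at this
      exact ⟨fun h => absurd h this, fun h => absurd h hS⟩
  · -- p entails ψ(x̄, b₀, b₁)
    intro x hxall
    have h1 : φ.Realize (Sum.elim x (b 0)) := hxall _ hφp
    have h2 : Formula.Realize (L := L) (M := Ω) (BoundedFormula.not φ) (Sum.elim x (b 1)) := hxall _ hnφp
    have h2' : ¬ φ.Realize (Sum.elim x (b 1)) := Formula.realize_not.mp h2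
    show ψ.Realize (Sum.elim x (c 0))
    have hc0 : c 0 = Fin.addCases (motive := fun _ => Ω) (b 0) (b 1) := rfl
    rw [hc0, hψ x (b 0) (b 1)]
    exact ⟨h1, h2'⟩
end

section
/- Assume T is dependent, b̄ is an infinite indiscernible sequence over A₁, B ⊆ A₁ ⊆ A₂, the sequence b̄ lies inside A₂, and tp(c̄, A₂) does not divide over B. Then b̄ is an infinite indiscernible sequence over A₁ ∪ c̄. -/
open FirstOrder FirstOrder.Language Set Cardinal

universe u

variable (L : FirstOrder.Language.{u, u}) (Ω : Type u) [L.Structure Ω]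

variable {L Ω}

variable (L Ω)

variable {Ω}

namespace ObsAux

/-! ### Arithmetic helpers -/

theorem sub_bound {v A B : ℕ} (h : v < A + B) (h2 : ¬ v < A) : v - A < B := by omega

theorem div_lt_mul {v M r : ℕ} (h : v < M * r) : v / r < M :=
  Nat.div_lt_of_lt_mul (by rwa [Nat.mul_comm] at h)

theorem enc_lt {x ρ M r : ℕ} (hx : x < M) (hρ : ρ < r) : r * x + ρ < M * r := by
  calc r * x + ρ < r * x + r := by omega
    _ = r * (x + 1) := by ring
    _ ≤ r * M := Nat.mul_le_mul le_rfl (by omega)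
    _ = M * r := Nat.mul_comm r M

theorem blk_lt {p j M n₂ : ℕ} (hp : p < M) (hj : j < n₂) : p + j * M < n₂ * M := by
  calc p + j * M < M + j * M := by omega
    _ = (j + 1) * M := by ring
    _ ≤ n₂ * M := Nat.mul_le_mul (by omega) le_rfl

theorem e_div {x ρ r : ℕ} (hρ : ρ < r) : (r * x + ρ) / r = x := by
  rw [Nat.mul_add_div (by omega), Nat.div_eq_of_lt hρ, Nat.add_zero]

theorem e_mod {x ρ r : ℕ} (hρ : ρ < r) : (r * x + ρ) % r = ρ := by
  rw [Nat.mul_add_mod]; exact Nat.mod_eq_of_lt hρ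

theorem f_div {x j M : ℕ} (hx : x < M) : (x + j * M) / M = j := by
  rw [Nat.add_mul_div_right _ _ (by omega : 0 < M), Nat.div_eq_of_lt hx, Nat.zero_add]

theorem f_mod {x j M : ℕ} (hx : x < M) : (x + j * M) % M = x := by
  rw [Nat.add_mul_mod_self_right]; exact Nat.mod_eq_of_lt hx

theorem div_mod_cases {M u u' : ℕ} (hM : 0 < M) (h : u < u') :
    u / M < u' / M ∨ (u / M = u' / M ∧ u % M < u' % M) := by
  have h1 := Nat.div_add_mod u M
  have h2 := Nat.div_add_mod u' M
  rcases Nat.lt_or_ge (u / M) (u' / M) with h' | h'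
  · exact Or.inl h'
  · have he : u / M = u' / M := le_antisymm (Nat.div_le_div_right h.le) h'
    refine Or.inr ⟨he, ?_⟩
    rw [← he] at h2
    linarith

theorem sm_blocks {D M nb : ℕ} (hD : 0 < D) (inner : ℕ → ℕ → ℕ) (outer : ℕ → ℕ)
    (hinner : ∀ j ⦃i i'⦄, i < i' → i' < D → inner j i < inner j i')
    (hbd : ∀ j i, i < D → inner j i < M)
    (hout : ∀ ⦃j j'⦄, j < j' → j' < nb → outer j < outer j')
    {u u' : ℕ} (h : u < u') (hu' : u' < nb * D) :
    inner (u / D) (u % D) + outer (u / D) * M <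
      inner (u' / D) (u' % D) + outer (u' / D) * M := by
  rcases div_mod_cases hD h with h' | ⟨h1, h2⟩
  · have hb : inner (u / D) (u % D) < M := hbd _ _ (Nat.mod_lt _ hD)
    have hub : u' / D < nb := Nat.div_lt_of_lt_mul (by rwa [Nat.mul_comm] at hu')
    have ho : outer (u / D) + 1 ≤ outer (u' / D) := hout h' hub
    have h3 : (outer (u / D) + 1) * M ≤ outer (u' / D) * M := Nat.mul_le_mul ho le_rfl
    have h4 : outer (u / D) * M + M = (outer (u / D) + 1) * M := by ring
    linarith [Nat.zero_le (inner (u' / D) (u' % D))]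
  · rw [h1]
    exact Nat.add_lt_add_right (hinner _ h2 (Nat.mod_lt _ hD)) _

/-! ### Extension of a tuple of indices to `ℕ` -/

def extF {n : ℕ} (w : Fin n → ℕ) (z : ℕ) : ℕ :=
  if h : z < n then w ⟨z, h⟩ else 0

theorem extF_eq {n : ℕ} (w : Fin n → ℕ) (i : Fin n) : extF w (i : ℕ) = w i := by
  unfold extF
  rw [dif_pos i.isLt]

theorem extF_mono {n : ℕ} {w : Fin n → ℕ} (hw : StrictMono w) :
    ∀ ⦃i i'⦄, i < i' → i' < n → extF w i < extF w i' := by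
  intro i i' h h'
  unfold extF
  rw [dif_pos (h.trans h'), dif_pos h']
  exact hw (Fin.mk_lt_mk.mpr h)

theorem extF_lt {n M : ℕ} {w : Fin n → ℕ} (hw : ∀ i, w i < M) :
    ∀ i, i < n → extF w i < M := by
  intro i hi
  unfold extF
  rw [dif_pos hi]
  exact hw _

end ObsAux
namespace ObsAux

/-! ### The auxiliary sequence `d` -/

def dseq {W : Type u} {r k₁ : ℕ} (M : ℕ) (hr : 0 < r) (b : ℕ → Fin r → W)
    (a : Fin k₁ → W) (j : ℕ) : Fin (M * r + k₁) → W := fun v =>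
  if hv : (v : ℕ) < M * r then b ((v : ℕ) / r + j * M) ⟨(v : ℕ) % r, Nat.mod_lt _ hr⟩
  else a ⟨(v : ℕ) - M * r, sub_bound v.isLt hv⟩

theorem dseq_lt {W : Type u} {r k₁ : ℕ} (M : ℕ) (hr : 0 < r) (b : ℕ → Fin r → W)
    (a : Fin k₁ → W) (j : ℕ) (v : Fin (M * r + k₁)) (hv : (v : ℕ) < M * r) :
    dseq M hr b a j v = b ((v : ℕ) / r + j * M) ⟨(v : ℕ) % r, Nat.mod_lt _ hr⟩ :=
  dif_pos hv

theorem dseq_ge {W : Type u} {r k₁ : ℕ} (M : ℕ) (hr : 0 < r) (b : ℕ → Fin r → W)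
    (a : Fin k₁ → W) (j : ℕ) (v : Fin (M * r + k₁)) (hv : ¬ (v : ℕ) < M * r) :
    dseq M hr b a j v = a ⟨(v : ℕ) - M * r, sub_bound v.isLt hv⟩ :=
  dif_neg hv

/-! ### The relabeling selecting a block pattern inside `d` -/

def pickMap {n m k₁ r : ℕ} (M : ℕ) (w : Fin n → ℕ) (hw : ∀ i, w i < M) :
    ((Fin n × Fin r) ⊕ Fin m) ⊕ Fin k₁ → Fin m ⊕ Fin (M * r + k₁)
  | .inl (.inl (i, ρ)) =>
      .inr ⟨r * w i + (ρ : ℕ), lt_of_lt_of_le (enc_lt (hw i) ρ.isLt) (Nat.le_add_right _ _)⟩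
  | .inl (.inr x) => .inl x
  | .inr ι => .inr ⟨M * r + (ι : ℕ), Nat.add_lt_add_left ι.isLt _⟩

theorem comp_pickMap {W : Type u} {n m k₁ r M : ℕ} (hr : 0 < r)
    (b : ℕ → Fin r → W) (a : Fin k₁ → W) (w : Fin n → ℕ) (hw : ∀ i, w i < M)
    (j : ℕ) (x : Fin m → W) :
    Sum.elim x (dseq M hr b a j) ∘ pickMap (m := m) M w hw
      = Sum.elim (Sum.elim (fun p : Fin n × Fin r => b (w p.1 + j * M) p.2) x) a := by
  funext v
  rcases v with (⟨i, ρ⟩ | x') | ι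
  · show dseq M hr b a j ⟨r * w i + (ρ : ℕ), _⟩ = b (w i + j * M) ρ
    rw [dseq_lt M hr b a j _ (enc_lt (hw i) ρ.isLt)]
    dsimp only
    rw [e_div ρ.isLt]
    congr 1
    exact Fin.ext (e_mod ρ.isLt)
  · rfl
  · show dseq M hr b a j ⟨M * r + (ι : ℕ), _⟩ = a ι
    rw [dseq_ge M hr b a j _ (Nat.not_lt.mpr (Nat.le_add_right _ _))]
    dsimp only
    congr 1
    exact Fin.ext (Nat.add_sub_cancel_left _ _)

/-! ### Full block relabeling, for indiscernibility of `d` -/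

def fullMap {k₁ k₂ r M n₂ : ℕ} (hr : 0 < r) :
    (Fin n₂ × Fin (M * r + k₁)) ⊕ Fin k₂ → (Fin (n₂ * M) × Fin r) ⊕ Fin (k₁ + k₂)
  | .inl (j, v) =>
      if hv : (v : ℕ) < M * r then
        .inl (⟨(v : ℕ) / r + (j : ℕ) * M, blk_lt (div_lt_mul hv) j.isLt⟩,
          ⟨(v : ℕ) % r, Nat.mod_lt _ hr⟩)
      else .inr ⟨(v : ℕ) - M * r, lt_of_lt_of_le (sub_bound v.isLt hv) (Nat.le_add_right _ _)⟩
  | .inr ι => .inr ⟨k₁ + (ι : ℕ), Nat.add_lt_add_left ι.isLt _⟩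

def ccF {W : Type u} {k₁ k₂ : ℕ} (a : Fin k₁ → W) (c₂ : Fin k₂ → W) : Fin (k₁ + k₂) → W :=
  fun u => if hu : (u : ℕ) < k₁ then a ⟨u, hu⟩ else c₂ ⟨(u : ℕ) - k₁, sub_bound u.isLt hu⟩

theorem ccF_lt {W : Type u} {k₁ k₂ : ℕ} (a : Fin k₁ → W) (c₂ : Fin k₂ → W)
    (u : Fin (k₁ + k₂)) (hu : (u : ℕ) < k₁) : ccF a c₂ u = a ⟨u, hu⟩ := dif_pos hu

theorem ccF_ge {W : Type u} {k₁ k₂ : ℕ} (a : Fin k₁ → W) (c₂ : Fin k₂ → W)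
    (u : Fin (k₁ + k₂)) (hu : ¬ (u : ℕ) < k₁) :
    ccF a c₂ u = c₂ ⟨(u : ℕ) - k₁, sub_bound u.isLt hu⟩ := dif_neg hu

def SfF {n₂ : ℕ} (M : ℕ) (s₂ : Fin n₂ → ℕ) (u : Fin (n₂ * M)) : ℕ :=
  (u : ℕ) % M + extF s₂ ((u : ℕ) / M) * M

theorem SfF_mono {n₂ M : ℕ} (hM : 0 < M) {s₂ : Fin n₂ → ℕ} (hs₂ : StrictMono s₂) :
    StrictMono (SfF M s₂) := by
  intro u u' h
  exact sm_blocks hM (fun _ i => i) (extF s₂) (fun _ _ _ hi _ => hi) (fun _ i hi => hi)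
    (extF_mono hs₂) h u'.isLt

theorem comp_fullMap {W : Type u} {r k₁ k₂ n₂ M : ℕ} (hr : 0 < r)
    (b : ℕ → Fin r → W) (a : Fin k₁ → W) (c₂ : Fin k₂ → W) (s₂ : Fin n₂ → ℕ) :
    Sum.elim (fun p : Fin (n₂ * M) × Fin r => b (SfF M s₂ p.1) p.2) (ccF a c₂) ∘ fullMap hr
      = Sum.elim (fun z : Fin n₂ × Fin (M * r + k₁) => dseq M hr b a (s₂ z.1) z.2) c₂ := by
  funext v
  rcases v with ⟨j, v'⟩ | ι
  · by_cases hv : (v' : ℕ) < M * r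
    · show Sum.elim _ _ (fullMap hr (Sum.inl (j, v'))) = dseq M hr b a (s₂ j) v'
      simp only [fullMap]
      rw [dif_pos hv]
      rw [dseq_lt M hr b a (s₂ j) v' hv]
      show b (SfF M s₂ ⟨(v' : ℕ) / r + (j : ℕ) * M, _⟩) _ = _
      unfold SfF
      dsimp only
      rw [f_mod (div_lt_mul hv), f_div (div_lt_mul hv), extF_eq]
    · show Sum.elim _ _ (fullMap hr (Sum.inl (j, v'))) = dseq M hr b a (s₂ j) v'
      simp only [fullMap]
      rw [dif_neg hv]
      rw [dseq_ge M hr b a (s₂ j) v' hv]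
      show ccF a c₂ ⟨(v' : ℕ) - M * r, _⟩ = _
      rw [ccF_lt a c₂ _ (sub_bound v'.isLt hv)]
  · show ccF a c₂ ⟨k₁ + (ι : ℕ), _⟩ = c₂ ι
    rw [ccF_ge a c₂ _ (Nat.not_lt.mpr (Nat.le_add_right _ _))]
    congr 1
    exact Fin.ext (by dsimp only; omega)

/-! ### The relabeling used against dependence -/

def thMap {n m k₁ r : ℕ} (LL : ℕ) (j : Fin LL) :
    ((Fin n × Fin r) ⊕ Fin m) ⊕ Fin k₁ → ((Fin (LL * n) × Fin r) ⊕ Fin k₁) ⊕ Fin m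
  | .inl (.inl (i, ρ)) => .inl (.inl (⟨(i : ℕ) + (j : ℕ) * n, blk_lt i.isLt j.isLt⟩, ρ))
  | .inl (.inr x) => .inr x
  | .inr ι => .inl (.inr ι)

def UmapF (LL n M : ℕ) (f : ℕ → ℕ → ℕ) (u : Fin (LL * n)) : ℕ :=
  f ((u : ℕ) / n) ((u : ℕ) % n) + ((u : ℕ) / n) * M

theorem UmapF_mono {LL n M : ℕ} (hn : 0 < n) {f : ℕ → ℕ → ℕ}
    (hf1 : ∀ j ⦃i i'⦄, i < i' → i' < n → f j i < f j i')
    (hf2 : ∀ j i, i < n → f j i < M) :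
    StrictMono (UmapF LL n M f) := by
  intro u u' h
  exact sm_blocks hn f id hf1 hf2 (fun _ _ hj _ => hj) h u'.isLt

theorem comp_thMap {W : Type u} {n m k₁ r : ℕ} (LL M : ℕ) (b : ℕ → Fin r → W)
    (a : Fin k₁ → W) (f : ℕ → ℕ → ℕ) (w : Fin n → ℕ) (j : Fin LL)
    (hfw : ∀ i : Fin n, f (j : ℕ) (i : ℕ) = w i) (x : Fin m → W) :
    (fun z => Sum.elim (Sum.elim (fun p : Fin (LL * n) × Fin r => b (UmapF LL n M f p.1) p.2) a) x (id z))
        ∘ thMap LL j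
      = Sum.elim (Sum.elim (fun p : Fin n × Fin r => b (w p.1 + (j : ℕ) * M) p.2) x) a := by
  funext v
  rcases v with (⟨i, ρ⟩ | x') | ι
  · show b (UmapF LL n M f ⟨(i : ℕ) + (j : ℕ) * n, _⟩) ρ = b (w i + (j : ℕ) * M) ρ
    unfold UmapF
    dsimp only
    rw [f_div i.isLt, f_mod i.isLt, hfw i]
  · rfl
  · rfl

end ObsAux
namespace ObsAux

open FirstOrder FirstOrder.Language

variable {Λ : FirstOrder.Language.{u, u}} {W : Type u} [Λ.Structure W]

theorem realize_chi {n m k₁ r M : ℕ} (hr : 0 < r) (b : ℕ → Fin r → W) (a : Fin k₁ → W)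
    (w : Fin n → ℕ) (hw : ∀ i, w i < M)
    (φh : Λ.Formula (((Fin n × Fin r) ⊕ Fin m) ⊕ Fin k₁)) (j : ℕ) (x : Fin m → W) :
    (φh.relabel (pickMap M w hw)).Realize (Sum.elim x (dseq M hr b a j)) ↔
      φh.Realize (Sum.elim (Sum.elim (fun p : Fin n × Fin r => b (w p.1 + j * M) p.2) x) a) := by
  rw [Formula.realize_relabel, comp_pickMap hr b a w hw j x]

theorem realize_iInf_univ {α : Type*} {LL : ℕ} (P : Fin LL → Λ.Formula α) (v : α → W) :
    Formula.Realize (BoundedFormula.iInf P) v ↔ ∀ j, Formula.Realize (P j) v := by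
  have h := BoundedFormula.realize_iInf (f := P) (v := v) (v' := default)
  exact h

theorem realize_th {n m k₁ r : ℕ} (LL M : ℕ) (b : ℕ → Fin r → W)
    (a : Fin k₁ → W) (f : ℕ → ℕ → ℕ) (w : Fin n → ℕ) (j : Fin LL)
    (hfw : ∀ i : Fin n, f (j : ℕ) (i : ℕ) = w i) (x : Fin m → W)
    (φh : Λ.Formula (((Fin n × Fin r) ⊕ Fin m) ⊕ Fin k₁)) :
    Formula.Realize (φh.relabel (thMap LL j))
      (fun z => Sum.elim (Sum.elim (fun p : Fin (LL * n) × Fin r =>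
        b (UmapF LL n M f p.1) p.2) a) x (id z)) ↔
      φh.Realize (Sum.elim (Sum.elim (fun p : Fin n × Fin r =>
        b (w p.1 + (j : ℕ) * M) p.2) x) a) := by
  rw [Formula.realize_relabel, comp_thMap LL M b a f w j hfw x]

theorem dseq_indisc {r k₁ M : ℕ} (hr : 0 < r) (hM : 0 < M) (b : ℕ → Fin r → W)
    (a : Fin k₁ → W) (B A₁ : Set W) (hBA : B ⊆ A₁) (hind : IndiscernibleOver Λ A₁ r b)
    (ha : ∀ ι, a ι ∈ A₁) :
    IndiscernibleOver Λ B (M * r + k₁) (dseq M hr b a) := by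
  intro n₂ k₂ s₂ t₂ hs₂ ht₂ φ₂ c₂ hc₂
  have key := hind (n₂ * M) (k₁ + k₂) (SfF M s₂) (SfF M t₂) (SfF_mono hM hs₂) (SfF_mono hM ht₂)
    (φ₂.relabel (fullMap hr)) (ccF a c₂) (by
      intro u
      rcases Nat.lt_or_ge (u : ℕ) k₁ with hu | hu
      · rw [ccF_lt a c₂ u hu]; exact ha _
      · rw [ccF_ge a c₂ u (Nat.not_lt.mpr hu)]; exact hBA (hc₂ _))
  rwa [Formula.realize_relabel, comp_fullMap hr b a c₂ s₂,
    Formula.realize_relabel, comp_fullMap hr b a c₂ t₂] at key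

open Classical in
noncomputable def gsplit {n r k m k₁ : ℕ} (cp : Fin k → W) (A₁ : Set W)
    (eK : {i : Fin k // cp i ∈ A₁} ≃ Fin k₁) (jc : ∀ i : Fin k, cp i ∉ A₁ → Fin m) :
    (Fin n × Fin r) ⊕ Fin k → ((Fin n × Fin r) ⊕ Fin m) ⊕ Fin k₁
  | .inl p => .inl (.inl p)
  | .inr i => if h : cp i ∈ A₁ then .inr (eK ⟨i, h⟩) else .inl (.inr (jc i h))

theorem comp_gsplit {n r k m k₁ : ℕ} (c : Fin m → W) (cp : Fin k → W)
    (A₁ : Set W) (eK : {i : Fin k // cp i ∈ A₁} ≃ Fin k₁)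
    (jc : ∀ i : Fin k, cp i ∉ A₁ → Fin m) (hjc : ∀ i h, c (jc i h) = cp i)
    (v : Fin n × Fin r → W) :
    Sum.elim (Sum.elim v c) (fun ι => cp (eK.symm ι).1) ∘ gsplit cp A₁ eK jc
      = Sum.elim v cp := by
  funext z
  rcases z with p | i
  · rfl
  · show Sum.elim (Sum.elim v c) (fun ι => cp (eK.symm ι).1)
      (gsplit (n := n) (r := r) cp A₁ eK jc (Sum.inr i)) = cp i
    by_cases h : cp i ∈ A₁
    · rw [show gsplit (n := n) (r := r) cp A₁ eK jc (Sum.inr i) = Sum.inr (eK ⟨i, h⟩)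
        from dif_pos h]
      show cp (eK.symm (eK ⟨i, h⟩)).1 = cp i
      rw [Equiv.symm_apply_apply]
    · rw [show gsplit (n := n) (r := r) cp A₁ eK jc (Sum.inr i)
          = Sum.inl (Sum.inr (jc i h)) from dif_neg h]
      exact hjc i h

end ObsAux
namespace ObsAux

open FirstOrder FirstOrder.Language

variable {Λ : FirstOrder.Language.{u, u}} {W : Type u} [Λ.Structure W]

theorem step3 {r n m k₁ M : ℕ} (hr : 0 < r) (hn : 0 < n) (hM : 0 < M)
    (b : ℕ → Fin r → W) (a : Fin k₁ → W) (A₁ : Set W) (ha : ∀ ι, a ι ∈ A₁)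
    (hind : IndiscernibleOver Λ A₁ r b)
    (s t : Fin n → ℕ) (hs : StrictMono s) (ht : StrictMono t)
    (hsM : ∀ i, s i < M) (htM : ∀ i, t i < M)
    (φh : Λ.Formula (((Fin n × Fin r) ⊕ Fin m) ⊕ Fin k₁)) (e : Fin m → W)
    (heS : ∀ j : ℕ, φh.Realize
      (Sum.elim (Sum.elim (fun p : Fin n × Fin r => b (s p.1 + j * M) p.2) e) a))
    (heT : ∀ j : ℕ, ¬ φh.Realize
      (Sum.elim (Sum.elim (fun p : Fin n × Fin r => b (t p.1 + j * M) p.2) e) a))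
    (S : Set ℕ) (F : Finset ℕ) :
    ∃ x : Fin m → W, ∀ j ∈ F,
      ((φh.relabel (pickMap M s hsM)).Realize (Sum.elim x (dseq M hr b a j)) ↔ j ∈ S) := by
  classical
  set LL := F.sup id + 1 with hLL
  have hjF : ∀ j ∈ F, j < LL := fun j hj => Nat.lt_succ_of_le (Finset.le_sup (f := id) hj)
  set fsel : ℕ → ℕ → ℕ := fun j => if j ∈ S then extF s else extF t with hfsel
  set ftar : ℕ → ℕ → ℕ := fun _ => extF s with hftar
  have hUS : StrictMono (UmapF LL n M fsel) := by
    apply UmapF_mono hn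
    · intro j i i' hi hi'
      simp only [hfsel]
      by_cases hj : j ∈ S
      · rw [if_pos hj]; exact extF_mono hs hi hi'
      · rw [if_neg hj]; exact extF_mono ht hi hi'
    · intro j i hi
      simp only [hfsel]
      by_cases hj : j ∈ S
      · rw [if_pos hj]; exact extF_lt hsM i hi
      · rw [if_neg hj]; exact extF_lt htM i hi
  have hUT : StrictMono (UmapF LL n M ftar) := by
    apply UmapF_mono hn
    · intro j i i' hi hi'
      simp only [hftar]
      exact extF_mono hs hi hi'
    · intro j i hi
      simp only [hftar]
      exact extF_lt hsM i hi
  set part : Fin LL → Λ.Formula (((Fin (LL * n) × Fin r) ⊕ Fin k₁) ⊕ Fin m) :=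
    fun j => if (j : ℕ) ∈ S then φh.relabel (thMap LL j) else (φh.relabel (thMap LL j)).not
    with hpart
  set Θ : Λ.Formula ((Fin (LL * n) × Fin r) ⊕ Fin k₁) :=
    Formula.iExs (Fin m) (BoundedFormula.iInf part) with hTheta
  have key := hind (LL * n) k₁ (UmapF LL n M fsel) (UmapF LL n M ftar) hUS hUT Θ a ha
  have hknown : Θ.Realize
      (Sum.elim (fun p : Fin (LL * n) × Fin r => b (UmapF LL n M fsel p.1) p.2) a) := by
    rw [hTheta, Formula.realize_iExs]
    refine ⟨e, ?_⟩
    rw [realize_iInf_univ]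
    intro j
    simp only [hpart]
    by_cases hj : (j : ℕ) ∈ S
    · rw [if_pos hj]
      erw [realize_th LL M b a fsel s j
        (fun i => by simp only [hfsel]; rw [if_pos hj, extF_eq]) e φh]
      exact heS j
    · rw [if_neg hj]
      rw [Formula.realize_not]
      erw [realize_th LL M b a fsel t j
        (fun i => by simp only [hfsel]; rw [if_neg hj, extF_eq]) e φh]
      exact heT j
  have htar := key.mp hknown
  rw [hTheta, Formula.realize_iExs] at htar
  obtain ⟨x, hx⟩ := htar
  rw [realize_iInf_univ] at hx
  refine ⟨x, fun j hj => ?_⟩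
  have hxj := hx ⟨j, hjF j hj⟩
  simp only [hpart] at hxj
  rw [realize_chi hr b a s hsM φh j x]
  by_cases hjS : j ∈ S
  · rw [if_pos hjS] at hxj
    erw [realize_th LL M b a ftar s ⟨j, hjF j hj⟩
      (fun i => by simp only [hftar]; rw [extF_eq]) x φh] at hxj
    exact iff_of_true hxj hjS
  · rw [if_neg hjS] at hxj
    rw [Formula.realize_not] at hxj
    erw [realize_th LL M b a ftar s ⟨j, hjF j hj⟩
      (fun i => by simp only [hftar]; rw [extF_eq]) x φh] at hxj
    exact iff_of_false hxj hjS

end ObsAux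
namespace ObsAux

open FirstOrder FirstOrder.Language

variable {Λ : FirstOrder.Language.{u, u}} {W : Type u} [Λ.Structure W]

theorem main_imp (hdep : IsDependent Λ W) (B A₁ A₂ : Set W) (hBA : B ⊆ A₁) (hA : A₁ ⊆ A₂)
    (r : ℕ) (b : ℕ → Fin r → W) (hind : IndiscernibleOver Λ A₁ r b)
    (hbA : ∀ (n : ℕ) (i : Fin r), b n i ∈ A₂)
    {m : ℕ} (c : Fin m → W)
    (hnd : ¬ DividesOver (L := Λ) B (tpOver c A₂))
    {n k : ℕ} {s t : Fin n → ℕ} (hs : StrictMono s) (ht : StrictMono t)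
    (φ : Λ.Formula ((Fin n × Fin r) ⊕ Fin k)) (cp : Fin k → W)
    (hcp : ∀ i, cp i ∈ A₁ ∪ Set.range c)
    (h1 : φ.Realize (Sum.elim (fun p => b (s p.1) p.2) cp)) :
    φ.Realize (Sum.elim (fun p => b (t p.1) p.2) cp) := by
  classical
  by_contra h2
  -- degenerate cases
  rcases Nat.eq_zero_or_pos n with hn | hn
  · refine h2 ?_
    have hfun : (fun p : Fin n × Fin r => b (s p.1) p.2)
        = fun p : Fin n × Fin r => b (t p.1) p.2 := by
      subst hn; funext p; exact p.1.elim0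
    rwa [← hfun]
  rcases Nat.eq_zero_or_pos r with hr | hr
  · refine h2 ?_
    have hfun : (fun p : Fin n × Fin r => b (s p.1) p.2)
        = fun p : Fin n × Fin r => b (t p.1) p.2 := by
      subst hr; funext p; exact p.2.elim0
    rwa [← hfun]
  -- the bound M
  have hlast : n - 1 < n := by omega
  set M := max (s ⟨n - 1, hlast⟩) (t ⟨n - 1, hlast⟩) + 1 with hMdef
  have hle_last : ∀ i : Fin n, i ≤ (⟨n - 1, hlast⟩ : Fin n) := by
    intro i
    rw [Fin.le_def]
    have := i.isLt
    dsimp only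
    omega
  have hsM : ∀ i, s i < M := fun i =>
    Nat.lt_succ_of_le (le_trans (hs.monotone (hle_last i)) (le_max_left _ _))
  have htM : ∀ i, t i < M := fun i =>
    Nat.lt_succ_of_le (le_trans (ht.monotone (hle_last i)) (le_max_right _ _))
  have hM0 : 0 < M := by omega
  -- splitting the parameters into an `A₁`-part and a `c`-part
  obtain ⟨k₁, a, haA, φh, h1', h2'⟩ :
      ∃ (k₁ : ℕ) (a : Fin k₁ → W), (∀ ι, a ι ∈ A₁) ∧
        ∃ φh : Λ.Formula (((Fin n × Fin r) ⊕ Fin m) ⊕ Fin k₁),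
          φh.Realize (Sum.elim (Sum.elim (fun p : Fin n × Fin r => b (s p.1) p.2) c) a) ∧
          ¬ φh.Realize (Sum.elim (Sum.elim (fun p : Fin n × Fin r => b (t p.1) p.2) c) a) := by
    obtain ⟨eK⟩ : Nonempty ({i : Fin k // cp i ∈ A₁} ≃
        Fin (Fintype.card {i : Fin k // cp i ∈ A₁})) := ⟨Fintype.equivFin _⟩
    obtain ⟨jc, hjc⟩ : ∃ jc : ∀ i : Fin k, cp i ∉ A₁ → Fin m, ∀ i h, c (jc i h) = cp i := by
      have hch : ∀ i : Fin k, cp i ∉ A₁ → ∃ jj : Fin m, c jj = cp i := by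
        intro i h
        rcases hcp i with h' | h'
        · exact absurd h' h
        · exact h'
      exact ⟨fun i h => (hch i h).choose, fun i h => (hch i h).choose_spec⟩
    refine ⟨_, fun ι => cp (eK.symm ι).1, fun ι => (eK.symm ι).2,
      φ.relabel (gsplit cp A₁ eK jc), ?_, ?_⟩
    · rw [Formula.realize_relabel, comp_gsplit c cp A₁ eK jc hjc]
      exact h1
    · rw [Formula.realize_relabel, comp_gsplit c cp A₁ eK jc hjc]
      exact h2
  -- the dividing formula with parameters
  set q : FormPar Λ W m :=
    ⟨M * r + k₁, ((φh.relabel (pickMap M s hsM)) ⊓ (φh.relabel (pickMap M t htM)).not,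
      dseq M hr b a 0)⟩ with hq
  have hq_mem : q ∈ tpOver c A₂ := by
    refine ⟨fun i => ?_, ?_⟩
    · show dseq M hr b a 0 i ∈ A₂
      rcases Nat.lt_or_ge (i : ℕ) (M * r) with hv | hv
      · rw [dseq_lt M hr b a 0 i hv]
        exact hbA _ _
      · rw [dseq_ge M hr b a 0 i (Nat.not_lt.mpr hv)]
        exact hA (haA _)
    · show ((φh.relabel (pickMap M s hsM)) ⊓ (φh.relabel (pickMap M t htM)).not).Realize
        (Sum.elim c (dseq M hr b a 0))
      rw [Formula.realize_inf]
      constructor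
      · rw [realize_chi hr b a s hsM φh 0 c]
        have h0 : (fun p : Fin n × Fin r => b (s p.1 + 0 * M) p.2)
            = fun p : Fin n × Fin r => b (s p.1) p.2 := by
          funext p; rw [Nat.zero_mul, Nat.add_zero]
        rw [h0]
        exact h1'
      · rw [Formula.realize_not, realize_chi hr b a t htM φh 0 c]
        have h0 : (fun p : Fin n × Fin r => b (t p.1 + 0 * M) p.2)
            = fun p : Fin n × Fin r => b (t p.1) p.2 := by
          funext p; rw [Nat.zero_mul, Nat.add_zero]
        rw [h0]
        exact h2'
  have hnotdiv : ¬ FormulaDividesOver B q := fun hdiv =>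
    hnd ⟨q, hdiv, fun x hx => hx q hq_mem⟩
  have hcons : ∃ e : Fin m → W, ∀ j : ℕ,
      ((φh.relabel (pickMap M s hsM)) ⊓ (φh.relabel (pickMap M t htM)).not).Realize
        (Sum.elim e (dseq M hr b a j)) := by
    by_contra hcon
    exact hnotdiv ⟨dseq M hr b a, rfl, dseq_indisc hr hM0 b a B A₁ hBA hind haA, hcon⟩
  obtain ⟨e, he⟩ := hcons
  have heS : ∀ j : ℕ, φh.Realize
      (Sum.elim (Sum.elim (fun p : Fin n × Fin r => b (s p.1 + j * M) p.2) e) a) := by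
    intro j
    have h' := (Formula.realize_inf.mp (he j)).1
    exact (realize_chi hr b a s hsM φh j e).mp h'
  have heT : ∀ j : ℕ, ¬ φh.Realize
      (Sum.elim (Sum.elim (fun p : Fin n × Fin r => b (t p.1 + j * M) p.2) e) a) := by
    intro j hcontr
    have h' := (Formula.realize_inf.mp (he j)).2
    rw [Formula.realize_not] at h'
    exact h' ((realize_chi hr b a t htM φh j e).mpr hcontr)
  exact hdep ⟨m, M * r + k₁, φh.relabel (pickMap M s hsM), dseq M hr b a,
    fun S F => step3 hr hn hM0 b a A₁ haA hind s t hs ht hsM htM φh e heS heT S F⟩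

end ObsAux

/-- Observation 10.3(6): in a dependent theory, an indiscernible sequence over `A₁`
inside `A₂` stays indiscernible over `A₁ ∪ c̄` whenever `tp(c̄, A₂)` does not divide
over `B ⊆ A₁ ⊆ A₂`. -/
theorem indiscernible_preserved_by_nondividing
    (hdep : IsDependent L Ω) (B A₁ A₂ : Set Ω) (hBA : B ⊆ A₁) (hA : A₁ ⊆ A₂)
    (r : ℕ) (b : ℕ → Fin r → Ω) (hind : IndiscernibleOver L A₁ r b)
    (hbA : ∀ (n : ℕ) (i : Fin r), b n i ∈ A₂)
    {m : ℕ} (c : Fin m → Ω)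
    (hnd : ¬ DividesOver (L := L) B (tpOver c A₂)) :
    IndiscernibleOver L (A₁ ∪ Set.range c) r b := by
  intro n k s t hs ht φ cp hcp
  exact ⟨fun h => ObsAux.main_imp hdep B A₁ A₂ hBA hA r b hind hbA c hnd hs ht φ cp hcp h,
    fun h => ObsAux.main_imp hdep B A₁ A₂ hBA hA r b hind hbA c hnd ht hs φ cp hcp h⟩
end
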